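/- Entries of an antiperiodic positive SL2-tiling are Farey distances between the vertices of two Farey polygons: let n, m ≥ 3 and let a : ℤ×ℤ → ℤ be an (n,m)-antiperiodic SL2-tiling with positive fundamental rectangle. Then there exist a Farey n-gon (u_0, …, u_{n−1}) and a Farey m-gon (w_0, …, w_{m−1}) with w_0 = (1,0) and w_{m−1} = (0,1), such that a(i,j) = |det(w_{(i−1) mod m}, u_j)| for all 0 ≤ i ≤ m−1 and 0 ≤ j ≤ n−1. -/

import Mathlib

/-- `fdet (a,b) (c,d) = a*d - b*c`. -/
def fdet (u v : ℤ × ℤ) : ℤ := u.1 * v.2 - u.2 * v.1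

/-- A primitive vector `(a,b) ∈ ℤ²`: `gcd(a,b) = 1`, `b ≥ 0`, and `a = 1` whenever `b = 0`. -/
def IsPrimitive (u : ℤ × ℤ) : Prop := Int.gcd u.1 u.2 = 1 ∧ 0 ≤ u.2 ∧ (u.2 = 0 → u.1 = 1)

/-- A Farey `n`-gon: primitive vectors `v 0, …, v (n-1)` with `det(v i, v j) > 0`
for `i < j < n`, `det(v i, v (i+1)) = 1` for `i + 1 < n`, and `det(v 0, v (n-1)) = 1`. -/
def IsFareyPolygon (n : ℕ) (v : ℕ → ℤ × ℤ) : Prop :=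
  (∀ i < n, IsPrimitive (v i)) ∧
  (∀ i j, i < j → j < n → 0 < fdet (v i) (v j)) ∧
  (∀ i, i + 1 < n → fdet (v i) (v (i + 1)) = 1) ∧
  fdet (v 0) (v (n - 1)) = 1

/-- An SL2-tiling: every adjacent 2×2 minor equals 1. -/
def IsSL2Tiling (a : ℤ → ℤ → ℤ) : Prop :=
  ∀ i j : ℤ, a i j * a (i + 1) (j + 1) - a i (j + 1) * a (i + 1) j = 1

/-- An `(n,m)`-antiperiodic array: rows are `n`-antiperiodic, columns `m`-antiperiodic. -/
def IsAntiperiodic (n m : ℕ) (a : ℤ → ℤ → ℤ) : Prop :=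
  ∀ i j : ℤ, a i (j + (n : ℤ)) = -a i j ∧ a (i + (m : ℤ)) j = -a i j

/-- A positive `m × n` fundamental rectangle: `a i j > 0` for `0 ≤ i ≤ m-1`, `0 ≤ j ≤ n-1`. -/
def HasPosRect (n m : ℕ) (a : ℤ → ℤ → ℤ) : Prop :=
  ∀ i j : ℤ, 0 ≤ i → i ≤ (m : ℤ) - 1 → 0 ≤ j → j ≤ (n : ℤ) - 1 → 0 < a i j


/-! The columns `u j = (a 0 j, a 1 j)` and the rows `(a i 0, a i 1)` of the tiling are
consecutive-unimodular sequences of vectors. No entry vanishes, since antiperiodicity propagates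
the positive rectangle (up to sign) to the whole plane. For two adjacent rows, Cramer's rule gives
`a i (j + 2) + a i j = c * a i (j + 1)` with the same `c` for both rows, so `c` does not depend
on the row: all rows satisfy one second-order linear recurrence in `j` and hence are combinations
of rows `0` and `1`, i.e. `a i j = det (w i, u j)` where `w i` collects the coefficients.
The map `(a i 0, a i 1) ↦ w i` lies in `SL₂(ℤ)`, so `w` is again consecutive-unimodular, with
`w 1 = (1, 0)` and `w m = -w 0 = (0, 1)`. Positivity of `det` is transitive on the closed first
quadrant, which turns both unimodular chains into Farey polygons. -/

lemma fdet_self (u : ℤ × ℤ) : fdet u u = 0 := by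
  rw [fdet, mul_comm, sub_self]

lemma fdet_neg_right (u v : ℤ × ℤ) : fdet u (-v) = -fdet u v := by
  simp only [fdet, Prod.fst_neg, Prod.snd_neg]
  ring

lemma fdet_comm (u v : ℤ × ℤ) : fdet v u = -fdet u v := by
  simp only [fdet]
  ring

lemma fdet_pos_trans {u v w : ℤ × ℤ} (hu₁ : 0 ≤ u.1) (hu₂ : 0 ≤ u.2) (hv₁ : 0 ≤ v.1)
    (hv₂ : 0 ≤ v.2) (hw₁ : 0 ≤ w.1) (hw₂ : 0 ≤ w.2)
    (huv : 0 < fdet u v) (hvw : 0 < fdet v w) : 0 < fdet u w := by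
  unfold fdet at *
  have hv₂' : 0 < v.2 := by nlinarith
  have hv₁' : 0 < v.1 := by nlinarith
  have key : u.2 * v.1 * (v.2 * w.1) < u.1 * v.2 * (v.1 * w.2) :=
    mul_lt_mul'' (sub_pos.mp huv) (sub_pos.mp hvw) (by positivity) (by positivity)
  have key' : u.2 * w.1 * (v.1 * v.2) < u.1 * w.2 * (v.1 * v.2) := by linarith
  exact sub_pos.mpr (lt_of_mul_lt_mul_right key' (by positivity))

lemma fdet_pos_of_lt {n : ℕ} {v : ℕ → ℤ × ℤ} (hv : ∀ i < n, 0 ≤ (v i).1 ∧ 0 ≤ (v i).2)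
    (hsucc : ∀ i, i + 1 < n → 0 < fdet (v i) (v (i + 1))) :
    ∀ i j, i < j → j < n → 0 < fdet (v i) (v j) := by
  intro i j hij hjn
  induction j, hij using Nat.le_induction with
  | base => exact hsucc i hjn
  | succ j hij ih =>
    exact fdet_pos_trans (hv i (by omega)).1 (hv i (by omega)).2 (hv j (by omega)).1
      (hv j (by omega)).2 (hv (j + 1) hjn).1 (hv (j + 1) hjn).2 (ih (by omega)) (hsucc j hjn)

lemma gcd_eq_one_of_fdet_eq_one_left {u v : ℤ × ℤ} (h : fdet u v = 1) : Int.gcd u.1 u.2 = 1 :=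
  Int.isCoprime_iff_gcd_eq_one.mp ⟨v.2, -v.1, by rw [← h, fdet]; ring⟩

lemma gcd_eq_one_of_fdet_eq_one_right {u v : ℤ × ℤ} (h : fdet u v = 1) : Int.gcd v.1 v.2 = 1 :=
  Int.isCoprime_iff_gcd_eq_one.mp ⟨-u.2, u.1, by rw [← h, fdet]; ring⟩

lemma isPrimitive_of_gcd_eq_one {u : ℤ × ℤ} (hg : Int.gcd u.1 u.2 = 1) (h₁ : 0 ≤ u.1)
    (h₂ : 0 ≤ u.2) : IsPrimitive u := by
  refine ⟨hg, h₂, fun h0 => ?_⟩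
  rw [h0, Int.gcd_zero_right] at hg
  omega

lemma isFareyPolygon_of_fdet_succ {n : ℕ} {v : ℕ → ℤ × ℤ}
    (hv : ∀ i < n, 0 ≤ (v i).1 ∧ 0 ≤ (v i).2)
    (hsucc : ∀ i, i + 1 < n → fdet (v i) (v (i + 1)) = 1)
    (hlast : fdet (v 0) (v (n - 1)) = 1) : IsFareyPolygon n v := by
  refine ⟨fun i hi => ?_, fdet_pos_of_lt hv fun i hi => by rw [hsucc i hi]; exact one_pos,
    hsucc, hlast⟩
  refine isPrimitive_of_gcd_eq_one ?_ (hv i hi).1 (hv i hi).2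
  by_cases hi' : i + 1 < n
  · exact gcd_eq_one_of_fdet_eq_one_left (hsucc i hi')
  · obtain rfl : i = n - 1 := by omega
    exact gcd_eq_one_of_fdet_eq_one_right hlast

lemma eq_zero_of_recurrence {R : Type*} [CommRing R] {q z : ℤ → R}
    (hz : ∀ j, z (j + 2) + z j = q j * z (j + 1)) (h₀ : z 0 = 0) (h₁ : z 1 = 0) (j : ℤ) :
    z j = 0 := by
  suffices ∀ j, z j = 0 ∧ z (j + 1) = 0 from (this j).1
  intro j
  induction j using Int.induction_on with
  | zero => exact ⟨h₀, by simpa using h₁⟩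
  | succ k ih =>
    refine ⟨ih.2, ?_⟩
    have := hz k
    rw [show (k : ℤ) + 2 = k + 1 + 1 by ring, ih.1, ih.2] at this
    simpa using this
  | pred k ih =>
    refine ⟨?_, by simpa using ih.1⟩
    have := hz (-k - 1)
    rw [show -(k : ℤ) - 1 + 2 = -k + 1 by ring, show -(k : ℤ) - 1 + 1 = -k by ring,
      ih.1, ih.2] at this
    simpa using this

def skipMinor (a : ℤ → ℤ → ℤ) (i j : ℤ) : ℤ :=
  a i j * a (i + 1) (j + 2) - a (i + 1) j * a i (j + 2)

namespace IsSL2Tiling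

variable {a : ℤ → ℤ → ℤ}

lemma add_eq_skipMinor_mul (h : IsSL2Tiling a) (i j : ℤ) :
    a i (j + 2) + a i j = skipMinor a i j * a i (j + 1) ∧
      a (i + 1) (j + 2) + a (i + 1) j = skipMinor a i j * a (i + 1) (j + 1) := by
  have h₁ := h i j
  have h₂ := h i (j + 1)
  rw [show j + 1 + 1 = j + 2 by ring] at h₂
  unfold skipMinor
  constructor
  · linear_combination (-a i (j + 2)) * h₁ - a i j * h₂
  · linear_combination (-a (i + 1) (j + 2)) * h₁ - a (i + 1) j * h₂

lemma skipMinor_succ (h : IsSL2Tiling a) {i j : ℤ} (hne : a (i + 1) (j + 1) ≠ 0) :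
    skipMinor a (i + 1) j = skipMinor a i j :=
  mul_right_cancel₀ hne
    (((h.add_eq_skipMinor_mul (i + 1) j).1).symm.trans (h.add_eq_skipMinor_mul i j).2)

lemma skipMinor_eq (h : IsSL2Tiling a) (hne : ∀ i j, a i j ≠ 0) (i j : ℤ) :
    skipMinor a i j = skipMinor a 0 j := by
  induction i using Int.induction_on with
  | zero => rfl
  | succ k ih => rw [h.skipMinor_succ (hne _ _), ih]
  | pred k ih =>
    rw [← ih, ← h.skipMinor_succ (hne _ _), sub_add_cancel]

lemma row_recurrence (h : IsSL2Tiling a) (hne : ∀ i j, a i j ≠ 0) (i j : ℤ) :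
    a i (j + 2) + a i j = skipMinor a 0 j * a i (j + 1) := by
  rw [← h.skipMinor_eq hne i]
  exact (h.add_eq_skipMinor_mul i j).1

end IsSL2Tiling

lemma IsAntiperiodic.ne_zero {n m : ℕ} {a : ℤ → ℤ → ℤ} (hAp : IsAntiperiodic n m a)
    (hPos : HasPosRect n m a) (hn : 0 < n) (hm : 0 < m) (i j : ℤ) : a i j ≠ 0 := by
  have hrow : Function.Antiperiodic (a i) n := fun j => (hAp i j).1
  have hcol : Function.Antiperiodic (a · (j % n)) m := fun i => (hAp i _).2
  have hj := hrow.add_int_mul_eq (x := j % n) (j / n)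
  have hi := hcol.add_int_mul_eq (x := i % m) (i / m)
  simp only [Int.cast_id, Int.emod_add_ediv_mul] at hi hj
  rw [hj, hi]
  have him := Int.emod_lt_of_pos i (Int.natCast_pos.mpr hm)
  have hjn := Int.emod_lt_of_pos j (Int.natCast_pos.mpr hn)
  refine mul_ne_zero (Units.ne_zero _) (mul_ne_zero (Units.ne_zero _) (hPos _ _ ?_ ?_ ?_ ?_).ne')
  all_goals first | omega | exact Int.emod_nonneg _ (by omega)

section Coordinates

variable (a : ℤ → ℤ → ℤ)

def colVec (j : ℤ) : ℤ × ℤ := (a 0 j, a 1 j)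

def rowVec (i : ℤ) : ℤ × ℤ := (a i 0, a i 1)

def rowCoord (i : ℤ) : ℤ × ℤ :=
  (fdet (rowVec a 0) (rowVec a i), fdet (rowVec a 1) (rowVec a i))

end Coordinates

namespace IsSL2Tiling

variable {a : ℤ → ℤ → ℤ}

lemma det_zero_zero (h : IsSL2Tiling a) : a 0 0 * a 1 1 - a 0 1 * a 1 0 = 1 := by
  simpa using h 0 0

lemma fdet_colVec_succ (h : IsSL2Tiling a) (j : ℤ) :
    fdet (colVec a j) (colVec a (j + 1)) = 1 := by
  have h₀ := h 0 j
  rw [zero_add] at h₀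
  unfold fdet colVec
  linear_combination h₀

lemma fdet_rowVec_succ (h : IsSL2Tiling a) (i : ℤ) :
    fdet (rowVec a i) (rowVec a (i + 1)) = 1 := by
  have h₀ := h i 0
  rw [zero_add] at h₀
  unfold fdet rowVec
  linear_combination h₀

lemma fdet_rowCoord (h : IsSL2Tiling a) (x y : ℤ) :
    fdet (rowCoord a x) (rowCoord a y) = fdet (rowVec a x) (rowVec a y) := by
  unfold rowCoord rowVec fdet
  linear_combination (a x 0 * a y 1 - a x 1 * a y 0) * h.det_zero_zero

lemma eq_fdet_rowCoord_colVec (h : IsSL2Tiling a) (hne : ∀ i j, a i j ≠ 0) (i j : ℤ) :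
    a i j = fdet (rowCoord a i) (colVec a j) := by
  refine sub_eq_zero.mp (eq_zero_of_recurrence (q := skipMinor a 0)
    (z := fun j => a i j - fdet (rowCoord a i) (colVec a j)) (fun j => ?_) ?_ ?_ j)
  all_goals unfold rowCoord colVec rowVec fdet
  · linear_combination h.row_recurrence hne i j
      - (a 0 0 * a i 1 - a 0 1 * a i 0) * h.row_recurrence hne 1 j
      + (a 1 0 * a i 1 - a 1 1 * a i 0) * h.row_recurrence hne 0 j
  · linear_combination (-a i 0) * h.det_zero_zero
  · linear_combination (-a i 1) * h.det_zero_zero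

variable {n m : ℕ}

lemma rowCoord_one (h : IsSL2Tiling a) : rowCoord a 1 = (1, 0) := by
  have h₀₁ := h.fdet_rowVec_succ 0
  rw [zero_add] at h₀₁
  rw [rowCoord, h₀₁, fdet_self]

lemma rowCoord_period (h : IsSL2Tiling a) (hAp : IsAntiperiodic n m a) :
    rowCoord a m = (0, 1) := by
  have hm : rowVec a m = -rowVec a 0 := by
    simpa [rowVec] using And.intro ((hAp 0 0).2) ((hAp 0 1).2)
  have h₀₁ := h.fdet_rowVec_succ 0
  rw [zero_add] at h₀₁
  rw [rowCoord, hm, fdet_neg_right, fdet_neg_right, fdet_self, fdet_comm, h₀₁, neg_zero, neg_neg]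

lemma rowCoord_pred_add_one (h : IsSL2Tiling a) (hAp : IsAntiperiodic n m a) (hm : 0 < m) :
    rowCoord a ((m - 1 : ℕ) + 1) = (0, 1) := by
  rw [show ((m - 1 : ℕ) : ℤ) + 1 = m by omega, h.rowCoord_period hAp]

lemma fdet_colVec_zero_last (h : IsSL2Tiling a) (hAp : IsAntiperiodic n m a) (hn : 0 < n) :
    fdet (colVec a 0) (colVec a ((n - 1 : ℕ) : ℤ)) = 1 := by
  have hlast := h.fdet_colVec_succ ((n - 1 : ℕ) : ℤ)
  rw [show ((n - 1 : ℕ) : ℤ) + 1 = 0 + n by omega] at hlast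
  unfold colVec fdet at hlast ⊢
  rw [(hAp 0 0).1, (hAp 1 0).1] at hlast
  linear_combination hlast

lemma isFareyPolygon_colVec (h : IsSL2Tiling a) (hAp : IsAntiperiodic n m a)
    (hPos : HasPosRect n m a) (hn : 0 < n) (hm : 2 ≤ m) :
    IsFareyPolygon n (fun j : ℕ => colVec a j) := by
  refine isFareyPolygon_of_fdet_succ (fun j hj => ?_) (fun j _ => ?_)
    (h.fdet_colVec_zero_last hAp hn)
  · exact ⟨(hPos 0 j (by omega) (by omega) (by omega) (by omega)).le,
      (hPos 1 j (by omega) (by omega) (by omega) (by omega)).le⟩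
  · push_cast
    exact h.fdet_colVec_succ j

lemma fdet_rowVec_pos (h : IsSL2Tiling a) (hPos : HasPosRect n m a) (hn : 2 ≤ n) :
    ∀ i j : ℕ, i < j → j < m → 0 < fdet (rowVec a i) (rowVec a j) := by
  refine fdet_pos_of_lt (fun i hi => ?_) (fun i _ => ?_)
  · exact ⟨(hPos i 0 (by omega) (by omega) (by omega) (by omega)).le,
      (hPos i 1 (by omega) (by omega) (by omega) (by omega)).le⟩
  · push_cast
    rw [h.fdet_rowVec_succ]
    exact one_pos

lemma isFareyPolygon_rowCoord (h : IsSL2Tiling a) (hAp : IsAntiperiodic n m a)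
    (hPos : HasPosRect n m a) (hn : 2 ≤ n) (hm : 2 ≤ m) :
    IsFareyPolygon m (fun k : ℕ => rowCoord a (k + 1)) := by
  have hlast := h.rowCoord_pred_add_one hAp (by omega)
  refine isFareyPolygon_of_fdet_succ (fun k hk => ?_) (fun k _ => ?_) ?_
  · rcases Nat.lt_or_ge (k + 1) m with hk' | hk'
    · have h₀ := h.fdet_rowVec_pos hPos hn 0 (k + 1) (by omega) hk'
      have h₁ : 0 ≤ fdet (rowVec a 1) (rowVec a (k + 1)) := by
        rcases Nat.eq_zero_or_pos k with rfl | hk0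
        · simp [fdet_self]
        · exact_mod_cast (h.fdet_rowVec_pos hPos hn 1 (k + 1) (by omega) hk').le
      exact ⟨by exact_mod_cast h₀.le, h₁⟩
    · obtain rfl : k = m - 1 := by omega
      simp [hlast]
  · rw [h.fdet_rowCoord]
    push_cast
    exact h.fdet_rowVec_succ _
  · rw [hlast]
    simp [h.rowCoord_one, fdet]

end IsSL2Tiling

/-- Entries of an `(n,m)`-antiperiodic SL2-tiling with positive fundamental rectangle
are Farey distances: there exist a Farey `n`-gon `u` and a Farey `m`-gon `w` with
`w 0 = (1,0)` (i.e. `∞`) and `w (m-1) = (0,1)` (i.e. `0`) such that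
`a i j = |det(w_{(i−1) mod m}, u_j)|` on the fundamental rectangle. -/
theorem stmt18 (n m : ℕ) (hn : 3 ≤ n) (hm : 3 ≤ m) (a : ℤ → ℤ → ℤ)
    (hSL : IsSL2Tiling a) (hAp : IsAntiperiodic n m a) (hPos : HasPosRect n m a) :
    ∃ u w : ℕ → ℤ × ℤ,
      IsFareyPolygon n u ∧ IsFareyPolygon m w ∧
      w 0 = (1, 0) ∧ w (m - 1) = (0, 1) ∧
      ∀ i j : ℕ, i < m → j < n →
        a (i : ℤ) (j : ℤ) = ((fdet (w ((i + m - 1) % m)) (u j)).natAbs : ℤ) := by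
  have hlast := hSL.rowCoord_pred_add_one hAp (by omega)
  refine ⟨fun j => colVec a j, fun k => rowCoord a (k + 1),
    hSL.isFareyPolygon_colVec hAp hPos (by omega) (by omega),
    hSL.isFareyPolygon_rowCoord hAp hPos (by omega) (by omega),
    by simpa using hSL.rowCoord_one, hlast, fun i j hi hj => ?_⟩
  have hpos := hPos i j (by omega) (by omega) (by omega) (by omega)
  dsimp only
  rw [Int.natCast_natAbs]
  rcases Nat.eq_zero_or_pos i with rfl | hi₀
  · rw [show (0 + m - 1) % m = m - 1 by rw [zero_add]; exact Nat.mod_eq_of_lt (by omega), hlast]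
    simp only [fdet, colVec, Nat.cast_zero, zero_mul, one_mul, zero_sub, abs_neg] at hpos ⊢
    exact (abs_of_pos hpos).symm
  · rw [show (i + m - 1) % m = i - 1 by
      rw [show i + m - 1 = i - 1 + m by omega, Nat.add_mod_right, Nat.mod_eq_of_lt (by omega)]]
    rw [show ((i - 1 : ℕ) : ℤ) + 1 = i by omega, ← hSL.eq_fdet_rowCoord_colVec
      (hAp.ne_zero hPos (by omega) (by omega)), abs_of_pos hpos]
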